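/- arXiv:1706.00750 — 6 statements merged into one kernel-verified Lean document; each statement's English description precedes it below -/
import Mathlib

section
/- For any nonempty permutation π, lpk(π) = ⌊udr(π)/2⌋ and val(π) = ⌊(udr(π) − 1)/2⌋. Consequently, the number of up-down runs determines both the number of left peaks and the number of valleys. -/
/-- A permutation: a list of distinct positive integers. -/
def IsPerm (π : List ℕ) : Prop := π.Nodup ∧ ∀ x ∈ π, 0 < x

/-- The descent set (1-indexed): `i ∈ [n-1]` with `π_i > π_{i+1}`. -/
def desSet (π : List ℕ) : Finset ℕ :=
  (Finset.Icc 1 (π.length - 1)).filter (fun i => π.getD i 0 < π.getD (i-1) 0)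

/-- Number of descents. -/
def des (π : List ℕ) : ℕ := (desSet π).card

/-- Major index: sum of descent positions. -/
def maj (π : List ℕ) : ℕ := ∑ i ∈ desSet π, i

/-- Number of peaks: `2 ≤ i ≤ n-1` with `π_{i-1} < π_i > π_{i+1}` (1-indexed). -/
def pk (π : List ℕ) : ℕ :=
  ((Finset.Icc 2 (π.length - 1)).filter (fun i =>
    π.getD (i-2) 0 < π.getD (i-1) 0 ∧ π.getD i 0 < π.getD (i-1) 0)).card

/-- Number of valleys: `2 ≤ i ≤ n-1` with `π_{i-1} > π_i < π_{i+1}` (1-indexed). -/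
def valley (π : List ℕ) : ℕ :=
  ((Finset.Icc 2 (π.length - 1)).filter (fun i =>
    π.getD (i-1) 0 < π.getD (i-2) 0 ∧ π.getD (i-1) 0 < π.getD i 0)).card

/-- The left peak set: `i ∈ [n-1]` with `π_{i-1} < π_i > π_{i+1}`, where `π_0 := 0`. -/
def lpkSet (π : List ℕ) : Finset ℕ :=
  (Finset.Icc 1 (π.length - 1)).filter (fun i =>
    (0 :: π).getD (i-1) 0 < (0 :: π).getD i 0 ∧ (0 :: π).getD (i+1) 0 < (0 :: π).getD i 0)

/-- Number of left peaks. -/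
def lpk (π : List ℕ) : ℕ := (lpkSet π).card

/-- Number of biruns (maximal monotone consecutive subsequences):
one more than the number of direction changes, for lists with at least 2 letters. -/
def br (π : List ℕ) : ℕ :=
  if π.length ≤ 1 then π.length
  else 1 + ((Finset.Icc 2 (π.length - 1)).filter (fun i =>
      (π.getD (i-2) 0 < π.getD (i-1) 0 ↔ π.getD i 0 < π.getD (i-1) 0))).card

/-- Number of up-down runs: the biruns, together with `π_1` when `π_1 > π_2`. -/
def udr (π : List ℕ) : ℕ :=
  br π + (if 2 ≤ π.length ∧ π.getD 1 0 < π.getD 0 0 then 1 else 0)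

/-- The maximal increasing runs of a list. -/
def incRuns : List ℕ → List (List ℕ)
  | [] => []
  | [a] => [[a]]
  | a :: b :: l =>
    match incRuns (b :: l) with
    | [] => [[a]]
    | r :: rs => if a < b then (a :: r) :: rs else [a] :: r :: rs

/-- Number of long runs (maximal increasing runs of length at least 2). -/
def lr (π : List ℕ) : ℕ := ((incRuns π).filter (fun r => 2 ≤ r.length)).length

/-- `1` if the initial run is long, `0` otherwise. -/
def lir (π : List ℕ) : ℕ := if 2 ≤ ((incRuns π).headD []).length then 1 else 0

/-- `1` if the final run is long, `0` otherwise. -/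
def lfr (π : List ℕ) : ℕ := if 2 ≤ ((incRuns π).getLastD []).length then 1 else 0

/-- The descent composition: the lengths of the maximal increasing runs. -/
def descComp (π : List ℕ) : List ℕ := (incRuns π).map List.length

/-- `τ` is a shuffle of `π` and `σ`: a permutation of length `|π| + |σ|`
containing both `π` and `σ` as subsequences. -/
def IsShuffle (π σ τ : List ℕ) : Prop :=
  τ.length = π.length + σ.length ∧ IsPerm τ ∧ π.Sublist τ ∧ σ.Sublist τ

open Classical in
/-- The finite set of shuffles of `π` and `σ`. -/
noncomputable def shuffles (π σ : List ℕ) : Finset (List ℕ) :=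
  (π ++ σ).permutations.toFinset.filter (fun τ => IsShuffle π σ τ)

/-- `J` is a refinement of `M` in the refinement order on weak compositions
(where `M` covers `L` when `M` is obtained from `L` by replacing two consecutive
parts by their sum): `M` is obtained by summing consecutive nonempty blocks of `J`. -/
def Refines (J M : List ℕ) : Prop :=
  ∃ P : List (List ℕ), P.flatten = J ∧ P.map List.sum = M ∧ ∀ b ∈ P, b ≠ []

/-- Successive differences, starting from `prev`. -/
def diffList : ℕ → List ℕ → List ℕ
  | _, [] => []
  | prev, a :: rest => (a - prev) :: diffList a rest

/-- `Comp(A)`: the composition of `N` determined by `A = {a₁ < ⋯ < a_j} ⊆ [N-1]`,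
namely `(a₁, a₂ - a₁, …, N - a_j)`. -/
def compOfSet (N : ℕ) (A : Finset ℕ) : List ℕ :=
  diffList 0 ((A.sort (· ≤ ·)) ++ [N])

/-- The `q`-factorial `[n]_q! = (1)(1+q)⋯(1+q+⋯+q^{n-1})`. -/
noncomputable def qFact (q : RatFunc ℚ) (n : ℕ) : RatFunc ℚ :=
  ∏ j ∈ Finset.range n, ∑ i ∈ Finset.range (j+1), q ^ i

/-- The `q`-binomial coefficient `[n choose k]_q`. -/
noncomputable def qBinom (q : RatFunc ℚ) (n k : ℕ) : RatFunc ℚ :=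
  qFact q n / (qFact q k * qFact q (n - k))

private lemma getD_ne_of_nodup (l : List ℕ) (h : l.Nodup) {i j : ℕ}
    (hi : i < l.length) (hj : j < l.length) (hij : i ≠ j) : l.getD i 0 ≠ l.getD j 0 := by
  rw [List.getD_eq_getElem _ _ hi, List.getD_eq_getElem _ _ hj]
  intro e
  exact hij ((List.Nodup.getElem_inj_iff h).mp e)

private lemma card_filter_split (m : ℕ) (hm : 2 ≤ m) (C : ℕ → Prop) [DecidablePred C] :
    ((Finset.Icc 2 m).filter C).card
      = ((Finset.Icc 2 (m-1)).filter C).card + (if C m then 1 else 0) := by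
  have hsplit : Finset.Icc 2 m = insert m (Finset.Icc 2 (m-1)) := by
    ext i; simp only [Finset.mem_Icc, Finset.mem_insert]; omega
  rw [hsplit, Finset.filter_insert]
  split_ifs with h
  · rw [Finset.card_insert_of_notMem (by
      simp only [Finset.mem_filter, Finset.mem_Icc]
      rintro ⟨⟨-, h2⟩, -⟩; omega)]
  · simp

private lemma keyK : ∀ (π : List ℕ), π.Nodup → 2 ≤ π.length →
    pk π + (if π.getD 1 0 < π.getD 0 0 then 1 else 0)
      = valley π + (if π.getD (π.length - 1) 0 < π.getD (π.length - 2) 0 then 1 else 0) := by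
  intro π
  induction π using List.reverseRecOn with
  | nil => intro _ h2; simp at h2
  | append_singleton l x ih =>
    intro h h2
    have hl : l.Nodup := (List.sublist_append_left l [x]).nodup h
    by_cases hm : 2 ≤ l.length
    · have gA : ∀ i, i < l.length → (l ++ [x]).getD i 0 = l.getD i 0 :=
        fun i hi => List.getD_append l [x] 0 i hi
      have gx : (l ++ [x]).getD l.length 0 = x := by
        rw [List.getD_append_right l [x] 0 l.length le_rfl]; simp
      have e1 : (l ++ [x]).length - 1 = l.length := by simp
      have e2 : (l ++ [x]).length - 2 = l.length - 1 := by
        simp only [List.length_append, List.length_singleton]; omega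
      have hpk : pk (l ++ [x]) = pk l +
          (if l.getD (l.length-2) 0 < l.getD (l.length-1) 0 ∧ x < l.getD (l.length-1) 0
            then 1 else 0) := by
        unfold pk
        rw [e1, card_filter_split l.length hm]
        congr 1
        · congr 1
          apply Finset.filter_congr
          intro i hi
          simp only [Finset.mem_Icc] at hi
          rw [gA (i-2) (by omega), gA (i-1) (by omega), gA i (by omega)]
        · rw [gA (l.length-2) (by omega), gA (l.length-1) (by omega), gx]
      have hval : valley (l ++ [x]) = valley l +
          (if l.getD (l.length-1) 0 < l.getD (l.length-2) 0 ∧ l.getD (l.length-1) 0 < x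
            then 1 else 0) := by
        unfold valley
        rw [e1, card_filter_split l.length hm]
        congr 1
        · congr 1
          apply Finset.filter_congr
          intro i hi
          simp only [Finset.mem_Icc] at hi
          rw [gA (i-2) (by omega), gA (i-1) (by omega), gA i (by omega)]
        · rw [gA (l.length-2) (by omega), gA (l.length-1) (by omega), gx]
      have hab : l.getD (l.length-2) 0 ≠ l.getD (l.length-1) 0 :=
        getD_ne_of_nodup l hl (by omega) (by omega) (by omega)
      have hbmem : l.getD (l.length-1) 0 ∈ l := by
        rw [List.getD_eq_getElem _ _ (by omega)]
        exact List.getElem_mem _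
      have hxb : l.getD (l.length-1) 0 ≠ x := by
        have hd := List.disjoint_of_nodup_append h hbmem
        simp only [List.mem_singleton] at hd
        exact hd
      have ih' := ih hl hm
      rw [hpk, hval, gA 1 (by omega), gA 0 (by omega), e1, e2, gx,
        gA (l.length-1) (by omega)]
      split_ifs at ih' ⊢ <;> omega
    · have hl1 : l.length = 1 := by
        simp only [List.length_append, List.length_singleton] at h2; omega
      obtain ⟨p, rfl⟩ := List.length_eq_one_iff.mp hl1
      simp [pk, valley, show Finset.Icc 2 1 = (∅ : Finset ℕ) from rfl]


private lemma udr_eq (π : List ℕ) (h : π.Nodup) (h2 : 2 ≤ π.length) :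
    udr π = 1 + pk π + valley π + (if π.getD 1 0 < π.getD 0 0 then 1 else 0) := by
  have hbr : br π = 1 + (pk π + valley π) := by
    unfold br
    rw [if_neg (by omega)]
    congr 1
    unfold pk valley
    rw [← Finset.card_union_of_disjoint (by
      rw [Finset.disjoint_left]
      intro i hi1 hi2
      simp only [Finset.mem_filter] at hi1 hi2
      omega), ← Finset.filter_or]
    apply congrArg
    apply Finset.filter_congr
    intro i hi
    simp only [Finset.mem_Icc] at hi
    have d1 := getD_ne_of_nodup π h (i := i-2) (j := i-1) (by omega) (by omega) (by omega)
    have d2 := getD_ne_of_nodup π h (i := i) (j := i-1) (by omega) (by omega) (by omega)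
    constructor
    · intro hx; omega
    · intro hx; omega
  have hite : (if 2 ≤ π.length ∧ π.getD 1 0 < π.getD 0 0 then 1 else 0)
      = (if π.getD 1 0 < π.getD 0 0 then 1 else 0) := by
    by_cases hh : π.getD 1 0 < π.getD 0 0 <;> simp [h2, hh]
  unfold udr
  rw [hbr, hite]
  omega

private lemma lpk_eq (π : List ℕ) (hpos : ∀ x ∈ π, 0 < x) (h2 : 2 ≤ π.length) :
    lpk π = pk π + (if π.getD 1 0 < π.getD 0 0 then 1 else 0) := by
  unfold lpk lpkSet pk
  have hsplit : Finset.Icc 1 (π.length - 1) = insert 1 (Finset.Icc 2 (π.length - 1)) := by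
    ext i; simp only [Finset.mem_Icc, Finset.mem_insert]; omega
  have hfc : (Finset.Icc 2 (π.length-1)).filter (fun i =>
        (0::π).getD (i-1) 0 < (0::π).getD i 0 ∧ (0::π).getD (i+1) 0 < (0::π).getD i 0)
      = (Finset.Icc 2 (π.length-1)).filter (fun i =>
        π.getD (i-2) 0 < π.getD (i-1) 0 ∧ π.getD i 0 < π.getD (i-1) 0) := by
    apply Finset.filter_congr
    intro i hi
    simp only [Finset.mem_Icc] at hi
    obtain ⟨j, rfl⟩ : ∃ j, i = j + 2 := ⟨i - 2, by omega⟩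
    rw [show j + 2 - 1 = j + 1 from rfl, show j + 2 - 2 = j from rfl]
    simp only [List.getD_cons_succ]
  have hc1 : (0:ℕ) < π.getD 0 0 := by
    apply hpos
    rw [List.getD_eq_getElem _ _ (by omega)]
    exact List.getElem_mem _
  have c1 : ((0:ℕ) :: π).getD (1-1) 0 = 0 := rfl
  have c2 : ((0:ℕ) :: π).getD 1 0 = π.getD 0 0 := rfl
  have c3 : ((0:ℕ) :: π).getD (1+1) 0 = π.getD 1 0 := rfl
  rw [hsplit]
  simp only [Finset.filter_insert]
  rw [hfc, c1, c2, c3]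
  by_cases hd : π.getD 1 0 < π.getD 0 0
  · rw [if_pos (⟨hc1, hd⟩ : 0 < π.getD 0 0 ∧ π.getD 1 0 < π.getD 0 0), if_pos hd,
      Finset.card_insert_of_notMem (by
        simp only [Finset.mem_filter, Finset.mem_Icc]
        rintro ⟨⟨hh, -⟩, -⟩; omega)]
  · rw [if_neg (fun hh => hd hh.2), if_neg hd, Nat.add_zero]


/-- For any nonempty permutation `π`, `lpk(π) = ⌊udr(π)/2⌋` and
`val(π) = ⌊(udr(π)-1)/2⌋`. -/
theorem lpk_val_eq_udr_halves (π : List ℕ) (hperm : IsPerm π) (hne : π ≠ []) :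
    lpk π = udr π / 2 ∧ valley π = (udr π - 1) / 2 := by
  obtain ⟨hnd, hpos⟩ := hperm
  rcases Nat.lt_or_ge π.length 2 with hn | hn
  · have h0 : 0 < π.length := List.length_pos_iff.mpr hne
    have h1 : π.length = 1 := by omega
    obtain ⟨a, rfl⟩ := List.length_eq_one_iff.mp h1
    constructor <;>
      simp [lpk, lpkSet, valley, udr, br, show Finset.Icc 1 0 = (∅ : Finset ℕ) from rfl,
        show Finset.Icc 2 0 = (∅ : Finset ℕ) from rfl]
  · have hudr := udr_eq π hnd hn
    have hlpk := lpk_eq π hpos hn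
    have hK := keyK π hnd hn
    have he1 : (if π.getD 1 0 < π.getD 0 0 then 1 else 0) ≤ 1 := by split_ifs <;> omega
    have he2 : (if π.getD (π.length - 1) 0 < π.getD (π.length - 2) 0 then 1 else 0) ≤ 1 := by
      split_ifs <;> omega
    omega
end

section
/- For every n ≥ 1, every j with 0 ≤ j ≤ n−1, and every k with C(j+1,2) ≤ k ≤ nj − C(j+1,2), there exists a permutation π of [n] with exactly j descents and maj(π) = k. -/
/-!
Every subset `D ⊆ [n-1]` is the descent set of a permutation of `[n]`: extend a permutation of
`[n-1]` with descent set `D \ {n-1}` by a new largest letter `n` (no new descent), or shift its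
letters up by one and append `1` (a new descent at `n-1`). Such a permutation has `j = |D|`
descents and major index `∑ D`, so it remains to see that the sums of the `j`-element subsets of
`[m]` fill the interval `[C(j+1,2), jm - C(j,2)]`: small sums are attained by subsets of `[m-1]`,
and large ones by adding `m` to a `(j-1)`-subset of `[m-1]`.
-/

open Finset

theorem exists_subset_Icc_card_sum_eq (m j k : ℕ) (hj : j ≤ m) (hk1 : (j + 1).choose 2 ≤ k)
    (hk2 : k + (j + 1).choose 2 ≤ j * (m + 1)) :
    ∃ D ⊆ Icc 1 m, #D = j ∧ ∑ i ∈ D, i = k := by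
  induction m generalizing j k with
  | zero =>
    obtain rfl : j = 0 := by omega
    exact ⟨∅, by simp, by simp, by simp at hk2 ⊢; omega⟩
  | succ m ih =>
    by_cases hsmall : j ≤ m ∧ k + (j + 1).choose 2 ≤ j * (m + 1)
    · obtain ⟨D, hD, hcard, hsum⟩ := ih j k hsmall.1 hk1 hsmall.2
      exact ⟨D, hD.trans (Icc_subset_Icc_right m.le_succ), hcard, hsum⟩
    have hj0 : j ≠ 0 := by
      rintro rfl
      exact hsmall ⟨m.zero_le, by simpa using hk2⟩
    obtain ⟨i, rfl⟩ := Nat.exists_eq_add_one_of_ne_zero hj0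
    have hC : (i + 1 + 1).choose 2 = (i + 1).choose 2 + (i + 1) := by
      rw [Nat.choose_succ_succ', Nat.choose_one_right, add_comm]
    have hT : 2 * (i + 1).choose 2 = (i + 1) * i := by
      rw [Nat.choose_two_right, Nat.mul_div_cancel' (Nat.even_mul_pred_self _).two_dvd]
      simp
    -- `k` is too large for an `(i+1)`-subset of `[m]`, hence large enough to take `m + 1`
    have hlow : (i + 1).choose 2 + (m + 1) ≤ k := by
      rcases Nat.lt_or_ge i m with him | hmi
      · have : (i + 1) * (m + 1) < k + (i + 1 + 1).choose 2 := by
          by_contra! h; exact hsmall ⟨him, h⟩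
        nlinarith
      · obtain rfl : i = m := by omega
        omega
    obtain ⟨D, hD, hcard, hsum⟩ : ∃ D ⊆ Icc 1 m, #D = i ∧ ∑ i ∈ D, i = k - (m + 1) := by
      refine ih i _ (by omega) (by omega) ?_
      have : (i + 1) * (m + 1 + 1) = i * (m + 1) + (m + 1) + (i + 1) := by ring
      omega
    have hnotin : m + 1 ∉ D := fun h => by simpa using hD h
    refine ⟨insert (m + 1) D, insert_subset (by simp) (hD.trans (Icc_subset_Icc_right m.le_succ)),
      by rw [card_insert_of_notMem hnotin, hcard], ?_⟩
    rw [sum_insert hnotin, hsum]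
    omega

theorem desSet_append_singleton (π : List ℕ) (x : ℕ) :
    desSet (π ++ [x]) =
      if x < π.getD (π.length - 1) 0 then insert π.length (desSet π) else desSet π := by
  rcases Nat.eq_zero_or_pos π.length with hnil | hpos
  · simp [List.length_eq_zero_iff.mp hnil, desSet]
  have hget : ∀ i < π.length, (π ++ [x]).getD i 0 = π.getD i 0 := fun i hi =>
    List.getD_append _ _ _ _ hi
  have hlast : (π ++ [x]).getD π.length 0 = x := by simp
  ext i
  simp only [desSet, List.length_append, List.length_singleton, Nat.add_sub_cancel]
  rcases lt_trichotomy i π.length with hi | rfl | hi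
  · simp only [mem_filter, mem_Icc, hget i hi, hget (i - 1) (by omega)]
    split_ifs <;> simp only [mem_insert, mem_filter, mem_Icc] <;> omega
  · simp only [mem_filter, mem_Icc, hlast, hget _ (by omega : π.length - 1 < π.length)]
    split_ifs <;> simp only [mem_insert, mem_filter, mem_Icc, true_or, iff_true] <;> omega
  · split_ifs <;> simp only [mem_insert, mem_filter, mem_Icc] <;> omega

theorem desSet_map_of_strictMono {f : ℕ → ℕ} (hf : StrictMono f) (π : List ℕ) :
    desSet (π.map f) = desSet π := by
  simp only [desSet, List.length_map]
  refine filter_congr fun i hi => ?_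
  rw [mem_Icc] at hi
  rw [List.getD_eq_getElem _ _ (by simp; omega), List.getD_eq_getElem _ _ (by simp; omega),
    List.getD_eq_getElem _ _ (by omega), List.getD_eq_getElem _ _ (by omega),
    List.getElem_map, List.getElem_map, hf.lt_iff_lt]

theorem exists_perm_range'_desSet_eq (n : ℕ) (D : Finset ℕ) (hD : D ⊆ Icc 1 (n - 1)) :
    ∃ π : List ℕ, π.Perm (List.range' 1 n) ∧ desSet π = D := by
  induction n generalizing D with
  | zero => exact ⟨[], .refl _, by simpa [desSet, eq_comm] using hD⟩
  | succ n ih =>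
    obtain ⟨π, hπ, hdes⟩ := ih (D.erase n) fun i hi => by
      have := hD (mem_of_mem_erase hi); simp only [mem_Icc, mem_erase] at *; omega
    have hlen : π.length = n := by simpa using hπ.length_eq
    have hmem : ∀ x ∈ π, 1 ≤ x ∧ x ≤ n := fun x hx => by
      have := List.mem_range'_1.mp (hπ.subset hx); omega
    by_cases hn : n ∈ D
    · have hn1 : n ≠ 0 := by have := hD hn; simp at this; omega
      refine ⟨π.map (1 + ·) ++ [1], ?_, ?_⟩
      · rw [List.range'_succ, ← List.map_add_range']
        exact ((hπ.map _).append_right [1]).trans (List.perm_append_singleton _ _)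
      · rw [desSet_append_singleton, if_pos, desSet_map_of_strictMono add_right_strictMono,
          hdes, List.length_map, hlen, insert_erase hn]
        rw [List.length_map, hlen, List.getD_eq_getElem _ _ (by simp; omega), List.getElem_map]
        exact Nat.lt_add_of_pos_right (hmem _ (List.getElem_mem _)).1
    · refine ⟨π ++ [n + 1], ?_, ?_⟩
      · rw [List.range'_1_concat, add_comm 1 n]
        exact hπ.append_right _
      · rw [desSet_append_singleton, if_neg, hdes, erase_eq_of_notMem hn]
        rw [hlen]
        rcases eq_or_ne n 0 with rfl | hn0
        · simp [List.length_eq_zero_iff.mp hlen]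
        · rw [List.getD_eq_getElem π 0 (by omega)]
          exact Nat.not_lt.mpr (Nat.le_succ_of_le (hmem _ (List.getElem_mem _)).2)

theorem exists_perm_des_maj_general (n j k : ℕ) (hj : j ≤ n - 1)
    (hk1 : Nat.choose (j+1) 2 ≤ k) (hk2 : k ≤ n * j - Nat.choose (j+1) 2) :
    ∃ π : List ℕ, π.Perm (List.range' 1 n) ∧ des π = j ∧ maj π = k := by
  have hjn : j * (n - 1 + 1) = n * j := by
    rcases n with _ | n
    · simp [show j = 0 by omega]
    · simp [mul_comm]
  obtain ⟨D, hD, hcard, hsum⟩ := exists_subset_Icc_card_sum_eq (n - 1) j k hj hk1 (by omega)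
  obtain ⟨π, hπ, hdes⟩ := exists_perm_range'_desSet_eq n D hD
  exact ⟨π, hπ, by rw [des, hdes, hcard], by rw [maj, hdes, hsum]⟩

/-- For every `n ≥ 1`, `0 ≤ j ≤ n-1` and `C(j+1,2) ≤ k ≤ nj - C(j+1,2)`, there is a
permutation of `[n]` with `j` descents and major index `k`. -/
theorem exists_perm_des_maj (n j k : ℕ) (hn : 1 ≤ n) (hj : j ≤ n - 1)
    (hk1 : Nat.choose (j+1) 2 ≤ k) (hk2 : k ≤ n * j - Nat.choose (j+1) 2) :
    ∃ π : List ℕ, π.Perm (List.range' 1 n) ∧ des π = j ∧ maj π = k :=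
  exists_perm_des_maj_general n j k hj hk1 hk2
end

section
/- For every n ≥ 1, every j with 0 ≤ j ≤ ⌊(n−1)/2⌋, and every k with j ≤ k ≤ n−j−1, there exists a permutation π of [n] with exactly j peaks and exactly k descents. -/
/-! The permutation `1, n, 2, n-1, …, j, n-j+1, k+1, k, …, j+1, k+2, k+3, …, n-j` works: its
zigzag prefix has peaks exactly at positions `2, 4, …, 2j`, each of them also a descent, and the
decreasing run `n-j+1 > k+1 > k > ⋯ > j+1` adds the `k - j` descents at positions `2j+1, …, j+k`
without creating a further peak. -/

section ListsOfValues

variable {n : ℕ} {f : ℕ → ℕ}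

lemma getD_map_range {i : ℕ} (hi : i < n) : ((List.range n).map f).getD i 0 = f i := by
  simp [List.getD_eq_getElem?_getD, hi]

lemma desSet_map_range :
    desSet ((List.range n).map f) = (Finset.Icc 1 (n - 1)).filter (fun i => f i < f (i - 1)) := by
  unfold desSet
  rw [List.length_map, List.length_range]
  refine Finset.filter_congr fun i hi => ?_
  rw [Finset.mem_Icc] at hi
  rw [getD_map_range (by omega), getD_map_range (by omega)]

lemma pk_map_range :
    pk ((List.range n).map f) = ((Finset.Icc 2 (n - 1)).filter
      (fun i => f (i - 2) < f (i - 1) ∧ f i < f (i - 1))).card := by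
  unfold pk
  rw [List.length_map, List.length_range]
  congr 1
  refine Finset.filter_congr fun i hi => ?_
  rw [Finset.mem_Icc] at hi
  rw [getD_map_range (by omega), getD_map_range (by omega), getD_map_range (by omega)]

lemma perm_range'_of_injOn (hinj : Set.InjOn f (Set.Iio n))
    (hf : ∀ i < n, f i ∈ Finset.Icc 1 n) :
    ((List.range n).map f).Perm (List.range' 1 n) := by
  have hnodup : ((List.range n).map f).Nodup :=
    List.nodup_range.map_on fun a ha b hb => hinj (List.mem_range.1 ha) (List.mem_range.1 hb)
  refine List.perm_of_nodup_nodup_toFinset_eq hnodup List.nodup_range' ?_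
  have hsub : ((List.range n).map f).toFinset ⊆ Finset.Icc 1 n := by
    intro x hx
    obtain ⟨i, hi, rfl⟩ := List.mem_map.1 (List.mem_toFinset.1 hx)
    exact hf i (List.mem_range.1 hi)
  rw [Finset.eq_of_subset_of_card_le hsub (by simp [List.toFinset_card_of_nodup hnodup])]
  ext x
  simp only [Finset.mem_Icc, List.mem_toFinset, List.mem_range'_1]
  omega

end ListsOfValues

section Witness

variable {n j k : ℕ}

/-- The entry at position `i + 1` of the permutation described above. -/
def pkDesEntry (n j k i : ℕ) : ℕ :=
  if i < 2 * j then (if i % 2 = 0 then i / 2 + 1 else n - i / 2)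
  else if i ≤ j + k then k + 1 - (i - 2 * j)
  else i + 1 - j

def pkDesPerm (n j k : ℕ) : List ℕ := (List.range n).map (pkDesEntry n j k)

lemma pkDesEntry_injOn (hkn : k ≤ n - j - 1) : Set.InjOn (pkDesEntry n j k) (Set.Iio n) := by
  intro a ha b hb hab
  simp only [Set.mem_Iio] at ha hb
  unfold pkDesEntry at hab
  split_ifs at hab <;> omega

lemma pkDesEntry_mem_Icc (hkn : k ≤ n - j - 1) {i : ℕ} (hi : i < n) :
    pkDesEntry n j k i ∈ Finset.Icc 1 n := by
  rw [Finset.mem_Icc]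
  unfold pkDesEntry
  split_ifs <;> omega

lemma pkDesEntry_lt_prev_iff (hkn : k ≤ n - j - 1) {i : ℕ} (hi : 1 ≤ i) (hin : i < n) :
    pkDesEntry n j k i < pkDesEntry n j k (i - 1) ↔
      (i % 2 = 0 ∧ i ≤ 2 * j) ∨ (2 * j < i ∧ i ≤ j + k) := by
  unfold pkDesEntry
  split_ifs <;> omega

lemma pkDesPerm_perm (hkn : k ≤ n - j - 1) : (pkDesPerm n j k).Perm (List.range' 1 n) :=
  perm_range'_of_injOn (pkDesEntry_injOn hkn) fun _ hi => pkDesEntry_mem_Icc hkn hi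

lemma pkDesPerm_desSet (hjk : j ≤ k) (hkn : k ≤ n - j - 1) : desSet (pkDesPerm n j k) =
    (Finset.Icc 1 j).image (2 * ·) ∪ Finset.Icc (2 * j + 1) (j + k) := by
  ext i
  simp only [pkDesPerm, desSet_map_range, Finset.mem_filter, Finset.mem_Icc, Finset.mem_union,
    Finset.mem_image]
  constructor
  · rintro ⟨hi, hlt⟩
    rw [pkDesEntry_lt_prev_iff hkn (by omega) (by omega)] at hlt
    rcases hlt with ⟨heven, hle⟩ | hmid
    · exact Or.inl ⟨i / 2, by omega, by omega⟩
    · exact Or.inr (by omega)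
  · rintro (⟨a, ha, rfl⟩ | hmid) <;>
      exact ⟨by omega, (pkDesEntry_lt_prev_iff hkn (by omega) (by omega)).2 (by omega)⟩

lemma pkDesPerm_des (hjk : j ≤ k) (hkn : k ≤ n - j - 1) : des (pkDesPerm n j k) = k := by
  rw [des, pkDesPerm_desSet hjk hkn, Finset.card_union_of_disjoint,
    Finset.card_image_of_injective _ (mul_right_injective₀ two_ne_zero),
    Nat.card_Icc, Nat.card_Icc]
  · omega
  · rw [Finset.disjoint_left]
    rintro _ hx hy
    simp only [Finset.mem_image, Finset.mem_Icc] at hx hy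
    omega

lemma pkDesPerm_pk (hjk : j ≤ k) (hkn : k ≤ n - j - 1) : pk (pkDesPerm n j k) = j := by
  set f := pkDesEntry n j k
  -- entries are distinct, so an ascent at `i - 1` is the absence of a descent there
  have hasc {i : ℕ} (hi : 2 ≤ i) (hin : i < n) :
      f (i - 2) < f (i - 1) ↔
        ¬ ((i - 1) % 2 = 0 ∧ i - 1 ≤ 2 * j ∨ 2 * j < i - 1 ∧ i - 1 ≤ j + k) := by
    have hne : f (i - 1) ≠ f (i - 2) := fun h => by
      have := pkDesEntry_injOn hkn (Set.mem_Iio.2 (by omega)) (Set.mem_Iio.2 (by omega)) h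
      omega
    rw [← pkDesEntry_lt_prev_iff hkn (by omega) (by omega), show i - 1 - 1 = i - 2 by omega,
      not_lt, lt_iff_le_and_ne]
    exact and_iff_left hne.symm
  have hpeaks : (Finset.Icc 2 (n - 1)).filter (fun i => f (i - 2) < f (i - 1) ∧ f i < f (i - 1)) =
      (Finset.Icc 1 j).image (2 * ·) := by
    ext i
    simp only [Finset.mem_filter, Finset.mem_Icc, Finset.mem_image]
    constructor
    · rintro ⟨hi, hup, hdown⟩
      rw [hasc hi.1 (by omega)] at hup
      rw [pkDesEntry_lt_prev_iff hkn (by omega) (by omega)] at hdown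
      exact ⟨i / 2, by omega, by omega⟩
    · rintro ⟨a, ha, rfl⟩
      exact ⟨by omega, (hasc (by omega) (by omega)).2 (by omega),
        (pkDesEntry_lt_prev_iff hkn (by omega) (by omega)).2 (by omega)⟩
  rw [pkDesPerm, pk_map_range, hpeaks,
    Finset.card_image_of_injective _ (mul_right_injective₀ two_ne_zero), Nat.card_Icc]
  omega

end Witness

theorem exists_perm_pk_des_general (n j k : ℕ) (hk1 : j ≤ k) (hk2 : k ≤ n - j - 1) :
    ∃ π : List ℕ, π.Perm (List.range' 1 n) ∧ pk π = j ∧ des π = k :=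
  ⟨pkDesPerm n j k, pkDesPerm_perm hk2, pkDesPerm_pk hk1 hk2, pkDesPerm_des hk1 hk2⟩

/-- For every `n ≥ 1`, `0 ≤ j ≤ ⌊(n-1)/2⌋` and `j ≤ k ≤ n-j-1`, there is a
permutation of `[n]` with `j` peaks and `k` descents. -/
theorem exists_perm_pk_des (n j k : ℕ) (hn : 1 ≤ n) (hj : j ≤ (n - 1) / 2)
    (hk1 : j ≤ k) (hk2 : k ≤ n - j - 1) :
    ∃ π : List ℕ, π.Perm (List.range' 1 n) ∧ pk π = j ∧ des π = k :=
  exists_perm_pk_des_general n j k hk1 hk2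
end

section
/- The descent set statistic is shuffle-compatible: if π, π′ are permutations of the same length with Des(π) = Des(π′), and σ, σ′ are permutations of the same length with Des(σ) = Des(σ′), where π is disjoint from σ and π′ is disjoint from σ′, then for every set A, the number of shuffles τ of π and σ with Des(τ) = A equals the number of shuffles τ′ of π′ and σ′ with Des(τ′) = A. -/
/-!
Fix a set `B` of cut positions. A shuffle `τ` with `Des(τ) ⊆ B` increases within each block of
the cut, so it is the list of its letters sorted lexicographically by (block, letter): `τ` is
determined by the block label of each letter. Read along `π`, these labels increase weakly and
strictly across each descent of `π`, and likewise along `σ`; conversely, any two such labellings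
of `π` and `σ` that together use the block labels of the positions `0, …, |π| + |σ| - 1` sort to
a shuffle with descent set in `B` that they label. These conditions see only `Des(π)`, `Des(σ)`,
`|π|` and `|σ|`, so neither does the number of shuffles with `Des(τ) ⊆ B`; Möbius inversion over
the subsets of `B` gives the same for `Des(τ) = A`.
-/

open Finset

namespace Finset

variable {α β : Type*} [DecidableEq α]

lemma card_filter_subset_eq_sum (s : Finset β) (f : β → Finset α) (A : Finset α) :
    #{x ∈ s | f x ⊆ A} = ∑ C ∈ A.powerset, #{x ∈ s | f x = C} := by
  rw [card_eq_sum_card_fiberwise (f := f) (t := A.powerset)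
    fun x hx => mem_powerset.2 (mem_filter.1 hx).2]
  refine sum_congr rfl fun C hC => ?_
  rw [filter_filter]
  exact congrArg card (filter_congr fun x _ => ⟨And.right, fun h => ⟨h ▸ mem_powerset.1 hC, h⟩⟩)

lemma eq_of_forall_sum_powerset_eq {M : Type*} [AddCancelCommMonoid M] {f g : Finset α → M}
    (h : ∀ A : Finset α, ∑ C ∈ A.powerset, f C = ∑ C ∈ A.powerset, g C) (A : Finset α) :
    f A = g A := by
  induction A using strongInduction with
  | _ A ih =>
    have hA := h A
    rw [← add_sum_erase _ _ (mem_powerset_self A), ← add_sum_erase _ _ (mem_powerset_self A),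
      sum_congr rfl fun C hC => ih C (ssubset_iff_subset_ne.2
        ⟨mem_powerset.1 (mem_of_mem_erase hC), ne_of_mem_erase hC⟩)] at hA
    exact add_right_cancel hA

end Finset

namespace DesShuffle

lemma succ_mem_desSet_iff {w : List ℕ} {i : ℕ} (h : i + 1 < w.length) :
    i + 1 ∈ desSet w ↔ w[i + 1] < w[i] := by
  simp [desSet, h, Nat.le_sub_one_of_lt h, List.getElem?_eq_getElem (Nat.lt_of_succ_lt h)]

lemma desSet_subset_iff {w : List ℕ} {B : Finset ℕ} :
    desSet w ⊆ B ↔ ∀ i (h : i + 1 < w.length), w[i + 1] < w[i] → i + 1 ∈ B := by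
  refine ⟨fun hB i h hlt => hB ((succ_mem_desSet_iff h).2 hlt), fun hB j hj => ?_⟩
  obtain ⟨i, rfl⟩ : ∃ i, j = i + 1 :=
    Nat.exists_eq_add_one.2 (mem_Icc.1 (mem_filter.1 hj).1).1
  have h : i + 1 < w.length := by have := (mem_Icc.1 (mem_filter.1 hj).1).2; omega
  exact hB i h ((succ_mem_desSet_iff h).1 hj)

/-- Cutting a list just before each position of `B` (positions counted from `0`), the index of
the block containing position `p`. -/
def blockIdx (B : Finset ℕ) (p : ℕ) : ℕ := #{b ∈ B | b ≤ p}

lemma blockIdx_mono (B : Finset ℕ) : Monotone (blockIdx B) := fun _ _ h =>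
  card_le_card (monotone_filter_right B (fun _ _ hb => hb.trans h))

lemma blockIdx_lt_succ_iff {B : Finset ℕ} {p : ℕ} :
    blockIdx B p < blockIdx B (p + 1) ↔ p + 1 ∈ B := by
  have : {b ∈ B | b ≤ p + 1} = {b ∈ B | b ≤ p} ∪ {b ∈ B | b = p + 1} := by
    ext b; simp only [mem_filter, mem_union]; grind
  rw [blockIdx, blockIdx, this,
    card_union_of_disjoint (disjoint_filter.2 fun _ _ h h' => by omega), filter_eq' B (p + 1)]
  split_ifs with h <;> simp [h]

def blockLabels (B : Finset ℕ) (n : ℕ) : List ℕ := (List.range n).map (blockIdx B)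

lemma sortedLE_blockLabels (B : Finset ℕ) (n : ℕ) : (blockLabels B n).SortedLE :=
  List.Pairwise.sortedLE <| List.pairwise_map.2 <|
    (List.sortedLT_range n).pairwise.imp fun h => blockIdx_mono B h.le

def IsDesCompatible (D : Finset ℕ) (g : List ℕ) : Prop :=
  ∀ i (h : i + 1 < g.length), g[i] ≤ g[i + 1] ∧ (i + 1 ∈ D → g[i] < g[i + 1])

def lexZip (g w : List ℕ) : List (ℕ ×ₗ ℕ) := (g.zip w).map toLex

lemma sortedLE_lexZip_iff {g w : List ℕ} (hlen : g.length = w.length) :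
    (lexZip g w).SortedLE ↔ IsDesCompatible (desSet w) g := by
  simp only [List.sortedLE_iff_isChain, List.isChain_iff_getElem, lexZip, List.getElem_map,
    List.getElem_zip, Prod.Lex.toLex_le_toLex, List.length_map, List.length_zip, IsDesCompatible]
  refine forall_congr' fun i => ⟨fun H h => ?_, fun H h => ?_⟩
  · have hw : i + 1 < w.length := by omega
    rw [succ_mem_desSet_iff hw]
    have := H (by omega); omega
  · have hw : i + 1 < w.length := by omega
    have := H (by omega); rw [succ_mem_desSet_iff hw] at this; omega

lemma desSet_subset_iff_sortedLE {τ : List ℕ} {B : Finset ℕ} :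
    desSet τ ⊆ B ↔ (lexZip (blockLabels B τ.length) τ).SortedLE := by
  rw [sortedLE_lexZip_iff (by simp [blockLabels]), desSet_subset_iff]
  simp only [IsDesCompatible, blockLabels, List.length_map, List.length_range, List.getElem_map,
    List.getElem_range]
  refine forall_congr' fun i => forall_congr' fun h => ?_
  rw [succ_mem_desSet_iff h, ← blockIdx_lt_succ_iff]
  have := blockIdx_mono B (Nat.le_add_right i 1)
  omega

def letterBlock (B : Finset ℕ) (τ : List ℕ) (x : ℕ) : ℕ := blockIdx B (τ.idxOf x)

lemma lexZip_map_self (f : ℕ → ℕ) (w : List ℕ) :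
    lexZip (w.map f) w = w.map fun x => toLex (f x, x) := by
  induction w with
  | nil => rfl
  | cons a w ih => simpa [lexZip] using ih

lemma map_ofLex_snd_lexZip {g w : List ℕ} (h : w.length ≤ g.length) :
    (lexZip g w).map (fun p => (ofLex p).2) = w := by
  simpa [lexZip, Function.comp_def] using List.map_snd_zip h

lemma map_letterBlock {τ : List ℕ} (hn : τ.Nodup) (B : Finset ℕ) :
    τ.map (letterBlock B τ) = blockLabels B τ.length := by
  refine List.ext_getElem (by simp [blockLabels]) fun p _ _ => ?_
  simp [letterBlock, blockLabels, hn.idxOf_getElem]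

lemma lexZip_blockLabels_eq {τ : List ℕ} (hn : τ.Nodup) (B : Finset ℕ) :
    lexZip (blockLabels B τ.length) τ = τ.map fun x => toLex (letterBlock B τ x, x) := by
  rw [← map_letterBlock hn, lexZip_map_self]

lemma eq_map_of_lexZip_perm {f : ℕ → ℕ} {g w τ : List ℕ} (hlen : g.length = w.length)
    (h : (lexZip g w).Perm (τ.map fun x => toLex (f x, x))) : g = w.map f := by
  refine List.ext_getElem (by simp [hlen]) fun i hg hw => ?_
  have hi : i < (lexZip g w).length := by simp [lexZip, hg, hlen ▸ hg]
  obtain ⟨x, -, hx⟩ := List.mem_map.1 (h.subset (List.getElem_mem hi))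
  simp only [lexZip, List.getElem_map, List.getElem_zip, toLex_inj, Prod.ext_iff] at hx
  simp [← hx.1, ← hx.2]

lemma isDesCompatible_map_letterBlock {π τ : List ℕ} {B : Finset ℕ} (hn : τ.Nodup)
    (hsub : π.Sublist τ) (hdes : desSet τ ⊆ B) :
    IsDesCompatible (desSet π) (π.map (letterBlock B τ)) := by
  rw [← sortedLE_lexZip_iff (List.length_map _), lexZip_map_self]
  rw [desSet_subset_iff_sortedLE, lexZip_blockLabels_eq hn] at hdes
  exact (hdes.pairwise.sublist (hsub.map _)).sortedLE

lemma eq_of_map_letterBlock_eq {w τ₁ τ₂ : List ℕ} {B : Finset ℕ} (hn : w.Nodup)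
    (h₁ : τ₁.Perm w) (h₂ : τ₂.Perm w) (hd₁ : desSet τ₁ ⊆ B) (hd₂ : desSet τ₂ ⊆ B)
    (h : w.map (letterBlock B τ₁) = w.map (letterBlock B τ₂)) : τ₁ = τ₂ := by
  rw [desSet_subset_iff_sortedLE] at hd₁ hd₂
  have hL := List.Perm.eq_of_sortedLE hd₁ hd₂ <| by
    rw [lexZip_blockLabels_eq (h₁.nodup_iff.2 hn), lexZip_blockLabels_eq (h₂.nodup_iff.2 hn)]
    have hw : (w.map fun x => toLex (letterBlock B τ₁ x, x)) =
        w.map fun x => toLex (letterBlock B τ₂ x, x) := by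
      rw [← lexZip_map_self, h, lexZip_map_self]
    exact (h₁.map _).trans (hw ▸ (h₂.map _).symm)
  have := congrArg (List.map fun p => (ofLex p).2) hL
  rwa [map_ofLex_snd_lexZip (by simp [blockLabels]),
    map_ofLex_snd_lexZip (by simp [blockLabels])] at this

def decode (g w : List ℕ) : List ℕ := ((lexZip g w).mergeSort (· ≤ ·)).map fun p => (ofLex p).2

section decode

variable {g w : List ℕ}

lemma decode_perm (hlen : g.length = w.length) : (decode g w).Perm w := by
  have := (List.mergeSort_perm (lexZip g w) (· ≤ ·)).map fun p => (ofLex p).2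
  rwa [map_ofLex_snd_lexZip hlen.ge] at this

lemma lexZip_blockLabels_decode (hlen : g.length = w.length) {B : Finset ℕ}
    (hg : g.Perm (blockLabels B w.length)) :
    lexZip (blockLabels B (decode g w).length) (decode g w) = (lexZip g w).mergeSort (· ≤ ·) := by
  set s := (lexZip g w).mergeSort (· ≤ ·)
  have hfst : s.map (fun p => (ofLex p).1) = blockLabels B (decode g w).length := by
    rw [(decode_perm hlen).length_eq]
    refine List.Perm.eq_of_sortedLE ?_ (sortedLE_blockLabels B _) ?_
    · exact (List.pairwise_map.2 (List.sortedLE_mergeSort.pairwise.imp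
        fun h => Prod.Lex.monotone_fst_ofLex h)).sortedLE
    · refine ((List.mergeSort_perm _ _).map _).trans ?_
      simpa [lexZip, Function.comp_def, List.map_fst_zip hlen.le] using hg
  rw [← hfst]
  change lexZip _ (s.map fun p => (ofLex p).2) = s
  simpa [lexZip, Function.comp_def] using
    congrArg (List.map toLex) (List.zip_unzip (s.map ofLex))

lemma desSet_decode_subset (hlen : g.length = w.length) {B : Finset ℕ}
    (hg : g.Perm (blockLabels B w.length)) : desSet (decode g w) ⊆ B := by
  rw [desSet_subset_iff_sortedLE, lexZip_blockLabels_decode hlen hg]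
  exact List.sortedLE_mergeSort

lemma map_letterBlock_decode (hlen : g.length = w.length) {B : Finset ℕ} (hw : w.Nodup)
    (hg : g.Perm (blockLabels B w.length)) : w.map (letterBlock B (decode g w)) = g := by
  refine (eq_map_of_lexZip_perm (τ := decode g w) hlen ?_).symm
  rw [← lexZip_blockLabels_eq ((decode_perm hlen).nodup_iff.2 hw),
    lexZip_blockLabels_decode hlen hg]
  exact (List.mergeSort_perm _ _).symm

end decode

lemma sublist_decode {g₁ w₁ g w : List ℕ} (hlen₁ : g₁.length = w₁.length)
    (hs : (lexZip g₁ w₁).SortedLE) (hsub : (lexZip g₁ w₁).Sublist (lexZip g w)) :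
    w₁.Sublist (decode g w) := by
  have := (List.sublist_of_subperm_of_sortedLE
    (hsub.subperm.trans (List.mergeSort_perm _ _).symm.subperm) hs
    List.sortedLE_mergeSort).map fun p => (ofLex p).2
  rwa [map_ofLex_snd_lexZip hlen₁.ge] at this

lemma perm_of_isShuffle {π σ τ : List ℕ} (hπ : IsPerm π) (hσ : IsPerm σ) (hd : π.Disjoint σ)
    (hτ : IsShuffle π σ τ) : τ.Perm (π ++ σ) := by
  have hsub : π ++ σ ⊆ τ := List.append_subset.2 ⟨hτ.2.2.1.subset, hτ.2.2.2.subset⟩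
  exact ((hπ.1.append hσ.1 hd).subperm hsub).perm_of_length_le
    (by rw [hτ.1, List.length_append]) |>.symm

lemma isShuffle_decode {π σ g h : List ℕ} (hπ : IsPerm π) (hσ : IsPerm σ) (hd : π.Disjoint σ)
    (hg : g.length = π.length) (hh : h.length = σ.length)
    (hcg : IsDesCompatible (desSet π) g) (hch : IsDesCompatible (desSet σ) h) :
    IsShuffle π σ (decode (g ++ h) (π ++ σ)) := by
  have hlen : (g ++ h).length = (π ++ σ).length := by simp [hg, hh]
  have hperm := decode_perm hlen
  have hzip : lexZip (g ++ h) (π ++ σ) = lexZip g π ++ lexZip h σ := by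
    simp [lexZip, List.zip_append hg]
  refine ⟨by rw [hperm.length_eq, List.length_append], ⟨hperm.nodup_iff.2 (hπ.1.append hσ.1 hd),
    fun x hx => ?_⟩, ?_, ?_⟩
  · rcases List.mem_append.1 (hperm.subset hx) with hx | hx
    exacts [hπ.2 x hx, hσ.2 x hx]
  · exact sublist_decode hg ((sortedLE_lexZip_iff hg).2 hcg)
      (hzip ▸ List.sublist_append_left _ _)
  · exact sublist_decode hh ((sortedLE_lexZip_iff hh).2 hch)
      (hzip ▸ List.sublist_append_right _ _)

def compatibleLabelings (D₁ : Finset ℕ) (n₁ : ℕ) (D₂ : Finset ℕ) (n₂ : ℕ) (B : Finset ℕ) :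
    Set (List ℕ × List ℕ) :=
  {gh | gh.1.length = n₁ ∧ gh.2.length = n₂ ∧ IsDesCompatible D₁ gh.1 ∧
    IsDesCompatible D₂ gh.2 ∧ (gh.1 ++ gh.2).Perm (blockLabels B (n₁ + n₂))}

theorem ncard_shuffles_desSet_subset {π σ : List ℕ} (hπ : IsPerm π) (hσ : IsPerm σ)
    (hd : π.Disjoint σ) (B : Finset ℕ) :
    {τ | IsShuffle π σ τ ∧ desSet τ ⊆ B}.ncard =
      (compatibleLabelings (desSet π) π.length (desSet σ) σ.length B).ncard := by
  have hnd : (π ++ σ).Nodup := hπ.1.append hσ.1 hd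
  refine Set.ncard_congr (fun τ _ => (π.map (letterBlock B τ), σ.map (letterBlock B τ)))
    ?_ ?_ ?_
  · rintro τ ⟨hτ, hdes⟩
    have hn := hτ.2.1.1
    refine ⟨List.length_map _, List.length_map _,
      isDesCompatible_map_letterBlock hn hτ.2.2.1 hdes,
      isDesCompatible_map_letterBlock hn hτ.2.2.2 hdes, ?_⟩
    rw [← List.map_append, ← hτ.1, ← map_letterBlock hn]
    exact ((perm_of_isShuffle hπ hσ hd hτ).map _).symm
  · rintro τ₁ τ₂ ⟨hτ₁, hd₁⟩ ⟨hτ₂, hd₂⟩ h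
    simp only [Prod.ext_iff] at h
    exact eq_of_map_letterBlock_eq hnd (perm_of_isShuffle hπ hσ hd hτ₁)
      (perm_of_isShuffle hπ hσ hd hτ₂) hd₁ hd₂
      (by rw [List.map_append, List.map_append, h.1, h.2])
  · rintro ⟨g, h⟩ ⟨hg, hh, hcg, hch, hperm⟩
    have hlen : (g ++ h).length = (π ++ σ).length := by simp [hg, hh]
    rw [← List.length_append] at hperm
    refine ⟨decode (g ++ h) (π ++ σ), ⟨isShuffle_decode hπ hσ hd hg hh hcg hch,
      desSet_decode_subset hlen hperm⟩, ?_⟩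
    have := map_letterBlock_decode hlen hnd hperm
    rw [List.map_append] at this
    obtain ⟨h₁, h₂⟩ := List.append_inj this (by simp [hg])
    rw [h₁, h₂]

lemma ncard_setOf_isShuffle_and {π σ : List ℕ} (hπ : IsPerm π) (hσ : IsPerm σ)
    (hd : π.Disjoint σ) (p : List ℕ → Prop) [DecidablePred p] :
    {τ | IsShuffle π σ τ ∧ p τ}.ncard = #{τ ∈ shuffles π σ | p τ} := by
  rw [← Set.ncard_coe_finset]
  congr 1
  ext τ
  simp only [shuffles, coe_filter, mem_filter, List.mem_toFinset, List.mem_permutations,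
    Set.mem_ofPred_eq]
  exact ⟨fun h => ⟨⟨perm_of_isShuffle hπ hσ hd h.1, h.1⟩, h.2⟩, fun h => ⟨h.1.2, h.2⟩⟩

end DesShuffle

open DesShuffle

/-- The descent set is shuffle-compatible. -/
theorem desSet_shuffle_compatible (π π' σ σ' : List ℕ)
    (hπ : IsPerm π) (hπ' : IsPerm π') (hσ : IsPerm σ) (hσ' : IsPerm σ')
    (hlen1 : π.length = π'.length) (hdes1 : desSet π = desSet π')
    (hlen2 : σ.length = σ'.length) (hdes2 : desSet σ = desSet σ')
    (hd : π.Disjoint σ) (hd' : π'.Disjoint σ') (A : Finset ℕ) :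
    {τ : List ℕ | IsShuffle π σ τ ∧ desSet τ = A}.ncard =
      {τ : List ℕ | IsShuffle π' σ' τ ∧ desSet τ = A}.ncard := by
  rw [ncard_setOf_isShuffle_and hπ hσ hd, ncard_setOf_isShuffle_and hπ' hσ' hd']
  refine eq_of_forall_sum_powerset_eq (f := fun C => #{τ ∈ shuffles π σ | desSet τ = C})
    (g := fun C => #{τ ∈ shuffles π' σ' | desSet τ = C}) (fun B => ?_) A
  rw [← card_filter_subset_eq_sum, ← card_filter_subset_eq_sum,
    ← ncard_setOf_isShuffle_and hπ hσ hd, ← ncard_setOf_isShuffle_and hπ' hσ' hd',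
    ncard_shuffles_desSet_subset hπ hσ hd, ncard_shuffles_desSet_subset hπ' hσ' hd',
    hlen1, hlen2, hdes1, hdes2]
end

section
/- For disjoint permutations π of length m and σ of length n, the sum of q^{maj(τ)} over all shuffles τ of π and σ equals q^{maj(π)+maj(σ)} times the q-binomial coefficient [m+n choose m]_q. -/
open Finset PowerSeries

lemma filter_append_of_disjoint {β : Type*} (f : β → ℕ) {a b : List β}
    (hd : (a.map f).Disjoint (b.map f)) :
    (a ++ b).filter (fun x => f x ∈ a.map f) = a ∧
      (a ++ b).filter (fun x => f x ∉ a.map f) = b := by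
  have hb (x : β) (hx : x ∈ b) : f x ∉ a.map f := fun h => hd h (List.mem_map_of_mem hx)
  simp only [List.filter_append]
  constructor
  · rw [List.filter_eq_self.2 (fun x hx => by simpa using List.mem_map_of_mem hx),
      List.filter_eq_nil_iff.2 (fun x hx => by simpa using hb x hx), List.append_nil]
  · rw [List.filter_eq_nil_iff.2 (fun x hx => by simpa using List.mem_map_of_mem hx),
      List.filter_eq_self.2 (fun x hx => by simpa using hb x hx), List.nil_append]

theorem mem_shuffles_iff {π σ τ : List ℕ} (hπ : IsPerm π) (hσ : IsPerm σ)
    (hd : π.Disjoint σ) :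
    τ ∈ shuffles π σ ↔ τ.filter (· ∈ π) = π ∧ τ.filter (· ∉ π) = σ := by
  classical
  rw [shuffles, mem_filter, List.mem_toFinset, List.mem_permutations]
  constructor
  · rintro ⟨hperm, -, -, hπτ, hστ⟩
    have hfilter {s : List ℕ} {p : ℕ → Bool} (hs : s.Sublist τ) (hps : ∀ x ∈ s, p x)
        (hp : (π ++ σ).filter p = s) : τ.filter p = s :=
      ((List.filter_eq_self.2 hps ▸ hs.filter p).eq_of_length_le
        (hp ▸ (hperm.filter p).length_eq.le)).symm
    have hsplit := filter_append_of_disjoint id (a := π) (b := σ) (by simpa using hd)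
    simp only [List.map_id, id] at hsplit
    exact ⟨hfilter hπτ (by simp) hsplit.1,
      hfilter hστ (fun x hx => by simpa using (hd · hx)) hsplit.2⟩
  · rintro ⟨hτπ, hτσ⟩
    have hperm : τ.Perm (π ++ σ) := by
      have := List.filter_append_perm (· ∈ π) τ
      simp only [← decide_not] at this
      rw [hτπ, hτσ] at this
      exact this.symm
    refine ⟨hperm, hperm.length_eq.trans List.length_append,
      ⟨hperm.nodup_iff.2 (List.nodup_append'.2 ⟨hπ.1, hσ.1, hd⟩), fun x hx => ?_⟩,
      hτπ ▸ List.filter_sublist, hτσ ▸ List.filter_sublist⟩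
    rcases List.mem_append.1 (hperm.subset hx) with h | h
    exacts [hπ.2 x h, hσ.2 x h]

lemma isShuffle_of_mem_shuffles {π σ τ : List ℕ} (h : τ ∈ shuffles π σ) : IsShuffle π σ τ := by
  classical
  rw [shuffles, mem_filter] at h
  exact h.2

structure LabelledLetter where
  letter : ℕ
  label : ℕ

namespace LabelledLetter

/-- Labels decrease and ties are broken by increasing letters, so that the labels along a
strictly increasing labelled word weakly decrease, and strictly at every descent of the word:
these are Stanley's compatible labellings (`P`-partitions) of the word. -/
def key (p : LabelledLetter) : ℕᵒᵈ ×ₗ ℕ := toLex (OrderDual.toDual p.label, p.letter)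

lemma key_injective : Function.Injective key := by
  rintro ⟨a, b⟩ ⟨c, d⟩ h
  simpa [key, and_comm] using h

instance : LinearOrder LabelledLetter := LinearOrder.lift' key key_injective

lemma lt_iff {p q : LabelledLetter} :
    p < q ↔ q.label < p.label ∨ q.label = p.label ∧ p.letter < q.letter := by
  change key p < key q ↔ _
  simp [key, Prod.Lex.toLex_lt_toLex, eq_comm]

end LabelledLetter

theorem List.filter_mergeSort_of_perm {α : Type*} [LinearOrder α] {l a : List α} {p : α → Bool}
    (ha : a.SortedLE) (h : (l.filter p).Perm a) : (l.mergeSort (· ≤ ·)).filter p = a :=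
  (((mergeSort_perm l _).filter p).trans h).eq_of_sortedLE
    (sortedLE_mergeSort.pairwise.filter p).sortedLE ha

def labelWord (w : List ℕ) (g : Fin w.length → ℕ) : List LabelledLetter :=
  List.ofFn fun i => ⟨w[i], g i⟩

open Classical in
def compatibleLabellings (w : List ℕ) (M : ℕ) : Finset (Fin w.length → ℕ) :=
  {g ∈ Nat.antidiagonalTuple w.length M | (labelWord w g).SortedLT}

def labelledWords (w : List ℕ) (M : ℕ) : Finset (List LabelledLetter) :=
  (compatibleLabellings w M).image (labelWord w)

lemma mem_compatibleLabellings {w : List ℕ} {M : ℕ} {g : Fin w.length → ℕ} :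
    g ∈ compatibleLabellings w M ↔ ∑ i, g i = M ∧ (labelWord w g).SortedLT := by
  simp [compatibleLabellings, Nat.mem_antidiagonalTuple]

lemma labelWord_injective (w : List ℕ) : Function.Injective (labelWord w) := fun g h e => by
  funext i
  simpa using congrArg LabelledLetter.label (congrFun (List.ofFn_injective e) i)

lemma card_labelledWords (w : List ℕ) (M : ℕ) :
    #(labelledWords w M) = #(compatibleLabellings w M) :=
  card_image_of_injective _ (labelWord_injective w)

lemma mem_labelledWords {w : List ℕ} {M : ℕ} {l : List LabelledLetter} :
    l ∈ labelledWords w M ↔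
      l.map LabelledLetter.letter = w ∧ l.SortedLT ∧ (l.map LabelledLetter.label).sum = M := by
  simp only [labelledWords, mem_image, mem_compatibleLabellings]
  constructor
  · rintro ⟨g, ⟨rfl, hg⟩, rfl⟩
    refine ⟨?_, hg, ?_⟩
    · simp [labelWord, List.map_ofFn, Function.comp_def]
    · simp [labelWord, List.map_ofFn, Function.comp_def, List.sum_ofFn]
  · rintro ⟨rfl, hl, rfl⟩
    have hlen : (l.map LabelledLetter.letter).length = l.length := List.length_map _
    have hw : labelWord (l.map LabelledLetter.letter) (fun i => l[i.cast hlen].label) = l :=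
      List.ext_getElem (by simp [labelWord]) fun i _ _ => by simp [labelWord]
    refine ⟨_, ⟨?_, by rwa [hw]⟩, hw⟩
    rw [← List.sum_ofFn]
    exact congrArg List.sum (List.ext_getElem (by simp) (by simp))

noncomputable def labelledShuffles (π σ : List ℕ) (M : ℕ) : Finset (List LabelledLetter) :=
  (shuffles π σ).biUnion (labelledWords · M)

def labelledPairs (π σ : List ℕ) (M : ℕ) :
    Finset (List LabelledLetter × List LabelledLetter) :=
  (antidiagonal M).biUnion fun p => labelledWords π p.1 ×ˢ labelledWords σ p.2

def splitByLetters (π : List ℕ) (l : List LabelledLetter) :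
    List LabelledLetter × List LabelledLetter :=
  (l.filter (·.letter ∈ π), l.filter (·.letter ∉ π))

lemma mem_labelledShuffles {π σ : List ℕ} {M : ℕ} {l : List LabelledLetter} :
    l ∈ labelledShuffles π σ M ↔ l.map LabelledLetter.letter ∈ shuffles π σ ∧ l.SortedLT ∧
      (l.map LabelledLetter.label).sum = M := by
  simp only [labelledShuffles, mem_biUnion, mem_labelledWords]
  constructor
  · rintro ⟨τ, hτ, rfl, hl⟩
    exact ⟨hτ, hl⟩
  · rintro ⟨hτ, hl⟩
    exact ⟨_, hτ, rfl, hl⟩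

lemma mem_labelledPairs {π σ : List ℕ} {M : ℕ} {a b : List LabelledLetter} :
    (a, b) ∈ labelledPairs π σ M ↔
      (a.map LabelledLetter.letter = π ∧ a.SortedLT) ∧
        (b.map LabelledLetter.letter = σ ∧ b.SortedLT) ∧
        (a.map LabelledLetter.label).sum + (b.map LabelledLetter.label).sum = M := by
  simp only [labelledPairs, mem_biUnion, mem_product, mem_labelledWords,
    HasAntidiagonal.mem_antidiagonal, Prod.exists]
  constructor
  · rintro ⟨i, j, rfl, ⟨ha, ha', rfl⟩, hb, hb', rfl⟩
    exact ⟨⟨ha, ha'⟩, ⟨hb, hb'⟩, rfl⟩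
  · rintro ⟨⟨ha, ha'⟩, ⟨hb, hb'⟩, rfl⟩
    exact ⟨_, _, rfl, ⟨ha, ha', rfl⟩, hb, hb', rfl⟩

lemma card_labelledShuffles (π σ : List ℕ) (M : ℕ) :
    #(labelledShuffles π σ M) = ∑ τ ∈ shuffles π σ, #(labelledWords τ M) :=
  card_biUnion fun _ _ _ _ hττ' => disjoint_left.2 fun _ h h' =>
    hττ' ((mem_labelledWords.1 h).1.symm.trans (mem_labelledWords.1 h').1)

lemma card_labelledPairs (π σ : List ℕ) (M : ℕ) :
    #(labelledPairs π σ M) =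
      ∑ p ∈ antidiagonal M, #(labelledWords π p.1) * #(labelledWords σ p.2) := by
  simp_rw [← card_product]
  refine card_biUnion fun p _ q _ hpq => disjoint_left.2 fun ab hp hq => hpq ?_
  simp only [mem_product, mem_labelledWords] at hp hq
  exact Prod.ext (hp.1.2.2.symm.trans hq.1.2.2) (hp.2.2.2.symm.trans hq.2.2.2)

lemma splitByLetters_mem_labelledPairs {π σ : List ℕ} (hπ : IsPerm π) (hσ : IsPerm σ)
    (hd : π.Disjoint σ) {M : ℕ} {l : List LabelledLetter} (hl : l ∈ labelledShuffles π σ M) :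
    splitByLetters π l ∈ labelledPairs π σ M := by
  obtain ⟨hτ, hsort, rfl⟩ := mem_labelledShuffles.1 hl
  obtain ⟨hτπ, hτσ⟩ := (mem_shuffles_iff hπ hσ hd).1 hτ
  have hperm := List.filter_append_perm (·.letter ∈ π) l
  simp only [← decide_not] at hperm
  refine mem_labelledPairs.2
    ⟨⟨List.filter_map.symm.trans hτπ, (hsort.pairwise.filter _).sortedLT⟩,
      ⟨List.filter_map.symm.trans hτσ, (hsort.pairwise.filter _).sortedLT⟩, ?_⟩
  simpa using (hperm.map LabelledLetter.label).sum_eq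

lemma splitByLetters_mergeSort {π σ : List ℕ} (hd : π.Disjoint σ) {M : ℕ}
    {a b : List LabelledLetter} (hab : (a, b) ∈ labelledPairs π σ M) :
    splitByLetters π ((a ++ b).mergeSort (· ≤ ·)) = (a, b) := by
  obtain ⟨⟨ha, ha_sort⟩, ⟨hb, hb_sort⟩, -⟩ := mem_labelledPairs.1 hab
  have hsplit := filter_append_of_disjoint LabelledLetter.letter (a := a) (b := b)
    (by rwa [ha, hb])
  rw [ha] at hsplit
  exact Prod.ext (List.filter_mergeSort_of_perm ha_sort.sortedLE (.of_eq hsplit.1))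
    (List.filter_mergeSort_of_perm hb_sort.sortedLE (.of_eq hsplit.2))

lemma mergeSort_mem_labelledShuffles {π σ : List ℕ} (hπ : IsPerm π) (hσ : IsPerm σ)
    (hd : π.Disjoint σ) {M : ℕ} {a b : List LabelledLetter}
    (hab : (a, b) ∈ labelledPairs π σ M) :
    (a ++ b).mergeSort (· ≤ ·) ∈ labelledShuffles π σ M := by
  obtain ⟨⟨ha, -⟩, ⟨hb, -⟩, hsum⟩ := mem_labelledPairs.1 hab
  have hperm := List.mergeSort_perm (a ++ b) (· ≤ ·)
  have hsplit := Prod.ext_iff.1 (splitByLetters_mergeSort hd hab)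
  refine mem_labelledShuffles.2 ⟨(mem_shuffles_iff hπ hσ hd).2 ⟨?_, ?_⟩,
    List.sortedLE_mergeSort.sortedLT_of_nodup ?_, ?_⟩
  · rw [List.filter_map]; exact (congrArg _ hsplit.1).trans ha
  · rw [List.filter_map]; exact (congrArg _ hsplit.2).trans hb
  · refine hperm.nodup_iff.2 (List.Nodup.of_map LabelledLetter.letter ?_)
    rw [List.map_append, ha, hb]
    exact List.nodup_append'.2 ⟨hπ.1, hσ.1, hd⟩
  · rw [(hperm.map _).sum_eq, List.map_append, List.sum_append, hsum]

theorem card_labelledShuffles_eq_card_labelledPairs {π σ : List ℕ} (hπ : IsPerm π)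
    (hσ : IsPerm σ) (hd : π.Disjoint σ) (M : ℕ) :
    #(labelledShuffles π σ M) = #(labelledPairs π σ M) := by
  refine card_nbij' (splitByLetters π) (fun ab => (ab.1 ++ ab.2).mergeSort (· ≤ ·))
    (fun l hl => splitByLetters_mem_labelledPairs hπ hσ hd hl)
    (fun ab hab => mergeSort_mem_labelledShuffles hπ hσ hd hab) (fun l hl => ?_)
    (fun ab hab => splitByLetters_mergeSort hd hab)
  have hperm := List.filter_append_perm (·.letter ∈ π) l
  simp only [← decide_not] at hperm
  exact ((List.mergeSort_perm _ _).trans hperm).eq_of_sortedLE List.sortedLE_mergeSort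
    (mem_labelledShuffles.1 hl).2.1.sortedLE

lemma mem_desSet_iff {w : List ℕ} {i : ℕ} :
    i ∈ desSet w ↔ ∃ (h₁ : 0 < i) (h₂ : i < w.length), w[i] < w[i - 1] := by
  simp only [desSet, mem_filter, mem_Icc]
  constructor
  · rintro ⟨⟨h₁, h₂⟩, h⟩
    refine ⟨h₁, by omega, ?_⟩
    rwa [List.getD_eq_getElem _ _ (by omega), List.getD_eq_getElem _ _ (by omega)] at h
  · rintro ⟨h₁, h₂, h⟩
    refine ⟨⟨h₁, by omega⟩, ?_⟩
    rwa [List.getD_eq_getElem _ _ (by omega), List.getD_eq_getElem _ _ (by omega)]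

/-- Positions `j` are counted from `0`, those in `desSet` from `1`: a descent `i ∈ desSet w` lies
after the letters `0, …, i - 1`. As a function of `j`, this is the least compatible labelling. -/
def descentsAfter (w : List ℕ) (j : ℕ) : ℕ := #{i ∈ desSet w | j < i}

lemma descentsAfter_eq_add (w : List ℕ) (j : ℕ) :
    descentsAfter w j = descentsAfter w (j + 1) + if j + 1 ∈ desSet w then 1 else 0 := by
  rw [descentsAfter, descentsAfter, ← card_filter_add_card_filter_not (p := (j + 1 < ·)),
    filter_filter, filter_filter, filter_congr (p := fun i => j < i ∧ ¬j + 1 < i)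
    (q := (· = j + 1)) (fun i _ => by omega), filter_eq']
  congr 2
  · exact filter_congr fun i _ => by omega
  · split_ifs <;> rfl

lemma descentsAfter_eq_zero {w : List ℕ} {j : ℕ} (h : w.length ≤ j + 1) :
    descentsAfter w j = 0 :=
  card_eq_zero.2 <| filter_eq_empty_iff.2 fun i hi hji => by
    obtain ⟨-, hi, -⟩ := mem_desSet_iff.1 hi
    omega

lemma sum_descentsAfter (w : List ℕ) : ∑ j : Fin w.length, descentsAfter w j = maj w := by
  rw [Fin.sum_univ_eq_sum_range (descentsAfter w)]
  simp only [descentsAfter, card_filter]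
  rw [sum_comm, maj]
  refine sum_congr rfl fun i hi => ?_
  obtain ⟨-, hi, -⟩ := mem_desSet_iff.1 hi
  rw [← card_filter, show {j ∈ range w.length | j < i} = range i by ext; simp; omega,
    card_range]

lemma sortedLT_labelWord_iff {w : List ℕ} (hw : w.Nodup) {g : Fin w.length → ℕ} :
    (labelWord w g).SortedLT ↔ ∀ j (hj : j + 1 < w.length),
      g ⟨j + 1, hj⟩ + descentsAfter w j ≤ g ⟨j, by omega⟩ + descentsAfter w (j + 1) := by
  simp only [List.sortedLT_iff_isChain, List.isChain_iff_getElem, labelWord, List.length_ofFn,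
    List.getElem_ofFn, Fin.getElem_fin, LabelledLetter.lt_iff]
  refine forall₂_congr fun j hj => ?_
  have hne : w[j] ≠ w[j + 1] := fun h => by
    have := hw.getElem_inj_iff.1 h
    omega
  have hdes : j + 1 ∈ desSet w ↔ w[j + 1] < w[j] := by
    simp [mem_desSet_iff, hj]
  rw [descentsAfter_eq_add w j]
  split_ifs with h <;> simp only [hdes] at h <;> omega

lemma descentsAfter_le_of_sortedLT {w : List ℕ} (hw : w.Nodup) {g : Fin w.length → ℕ}
    (hg : (labelWord w g).SortedLT) (j : Fin w.length) : descentsAfter w j ≤ g j := by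
  rw [sortedLT_labelWord_iff hw] at hg
  obtain ⟨j, hj⟩ := j
  change descentsAfter w j ≤ g ⟨j, hj⟩
  induction hk : w.length - (j + 1) generalizing j with
  | zero => simp [descentsAfter_eq_zero (show w.length ≤ j + 1 by omega)]
  | succ k ih =>
    have := ih (j + 1) (by omega) (by omega)
    have := hg j (by omega)
    omega

lemma compatibleLabellings_eq_empty {w : List ℕ} (hw : w.Nodup) {M : ℕ} (hM : M < maj w) :
    compatibleLabellings w M = ∅ := by
  refine eq_empty_of_forall_notMem fun g hg => ?_
  obtain ⟨hsum, hg⟩ := mem_compatibleLabellings.1 hg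
  have := sum_le_sum fun j (_ : j ∈ univ) => descentsAfter_le_of_sortedLT hw hg j
  rw [sum_descentsAfter] at this
  omega

open Classical in
def antitoneTuples (N M : ℕ) : Finset (Fin N → ℕ) :=
  {h ∈ Nat.antidiagonalTuple N M | Antitone h}

lemma mem_antitoneTuples {N M : ℕ} {h : Fin N → ℕ} :
    h ∈ antitoneTuples N M ↔ ∑ i, h i = M ∧ Antitone h := by
  simp [antitoneTuples, Nat.mem_antidiagonalTuple]

lemma antitone_iff_forall_succ_le {α : Type*} [Preorder α] {N : ℕ} {h : Fin N → α} :
    Antitone h ↔ ∀ j (hj : j + 1 < N), h ⟨j + 1, hj⟩ ≤ h ⟨j, by omega⟩ := by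
  rw [← List.sortedGE_ofFn_iff, List.sortedGE_iff_isChain, List.isChain_iff_getElem]
  simp

theorem card_compatibleLabellings_add_maj {w : List ℕ} (hw : w.Nodup) (M : ℕ) :
    #(compatibleLabellings w (M + maj w)) = #(antitoneTuples w.length M) := by
  refine card_nbij' (fun g j => g j - descentsAfter w j) (fun h j => h j + descentsAfter w j)
    (fun g hg => ?_) (fun h hh => ?_) (fun g hg => ?_) (fun h _ => by simp)
  · obtain ⟨hsum, hg⟩ := mem_compatibleLabellings.1 hg
    have hle := descentsAfter_le_of_sortedLT hw hg
    refine mem_antitoneTuples.2 ⟨?_, antitone_iff_forall_succ_le.2 fun j hj => ?_⟩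
    · rw [sum_tsub_distrib _ fun j _ => hle j, hsum, sum_descentsAfter, Nat.add_sub_cancel]
    · have := (sortedLT_labelWord_iff hw).1 hg j hj
      dsimp only
      omega
  · obtain ⟨hsum, hh⟩ := mem_antitoneTuples.1 hh
    refine mem_compatibleLabellings.2 ⟨?_, (sortedLT_labelWord_iff hw).2 fun j hj => ?_⟩
    · rw [sum_add_distrib, hsum, sum_descentsAfter]
    · have := antitone_iff_forall_succ_le.1 hh j hj
      dsimp only
      omega
  · funext j
    have := descentsAfter_le_of_sortedLT hw (mem_compatibleLabellings.1 hg).2 j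
    dsimp only
    omega

lemma card_antitoneTuples_zero (M : ℕ) : #(antitoneTuples 0 M) = if M = 0 then 1 else 0 := by
  split_ifs with hM
  · subst hM
    exact card_eq_one.2 ⟨![], eq_singleton_iff_unique_mem.2
      ⟨mem_antitoneTuples.2 ⟨by simp, fun a => a.elim0⟩, fun h _ => Subsingleton.elim _ _⟩⟩
  · exact card_eq_zero.2 <| eq_empty_of_forall_notMem fun h hh => hM (by
      simpa using (mem_antitoneTuples.1 hh).1.symm)

lemma card_antitoneTuples_last_eq_zero (N M : ℕ) :
    #{h ∈ antitoneTuples (N + 1) M | h (Fin.last N) = 0} = #(antitoneTuples N M) := by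
  refine card_nbij' Fin.init (Fin.snoc · 0) (fun h hh => ?_) (fun h hh => ?_)
    (fun h hh => ?_) (fun h _ => Fin.init_snoc _ _)
  · obtain ⟨⟨hsum, hanti⟩, hlast⟩ := And.imp_left mem_antitoneTuples.1 (mem_filter.1 hh)
    refine mem_antitoneTuples.2 ⟨?_, hanti.comp_monotone Fin.strictMono_castSucc.monotone⟩
    rw [← hsum, Fin.sum_univ_castSucc, hlast, add_zero]
    rfl
  · obtain ⟨hsum, hanti⟩ := mem_antitoneTuples.1 (mem_coe.1 hh)
    refine mem_filter.2
      ⟨mem_antitoneTuples.2 ⟨by simp [Fin.sum_univ_castSucc, hsum], fun a b hab => ?_⟩, by simp⟩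
    induction b using Fin.lastCases with
    | last => simp
    | cast b =>
      induction a using Fin.lastCases with
      | last => exact absurd hab (not_le.2 (Fin.castSucc_lt_last b))
      | cast a => simpa using hanti (Fin.castSucc_le_castSucc_iff.1 hab)
  · have hlast : h (Fin.last N) = 0 := (mem_filter.1 hh).2
    simpa [hlast] using Fin.snoc_init_self h

lemma card_antitoneTuples_last_ne_zero (N M : ℕ) :
    #{h ∈ antitoneTuples (N + 1) M | h (Fin.last N) ≠ 0} =
      if N + 1 ≤ M then #(antitoneTuples (N + 1) (M - (N + 1))) else 0 := by
  have hpos {h : Fin (N + 1) → ℕ}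
      (hh : h ∈ {h ∈ antitoneTuples (N + 1) M | h (Fin.last N) ≠ 0}) (i : Fin (N + 1)) :
      1 ≤ h i := by
    obtain ⟨⟨-, hanti⟩, hlast⟩ := And.imp_left mem_antitoneTuples.1 (mem_filter.1 hh)
    exact (Nat.one_le_iff_ne_zero.2 hlast).trans (hanti (Fin.le_last i))
  split_ifs with hM
  · refine card_nbij' (fun h i => h i - 1) (fun h i => h i + 1) (fun h hh => ?_)
      (fun h hh => ?_) (fun h hh => funext fun i => Nat.sub_add_cancel (hpos hh i))
      (fun h _ => by simp)
    · obtain ⟨⟨hsum, hanti⟩, -⟩ := And.imp_left mem_antitoneTuples.1 (mem_filter.1 hh)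
      refine mem_antitoneTuples.2 ⟨?_, fun a b hab => Nat.sub_le_sub_right (hanti hab) 1⟩
      rw [sum_tsub_distrib _ fun i _ => hpos hh i, hsum]
      simp
    · obtain ⟨hsum, hanti⟩ := mem_antitoneTuples.1 (mem_coe.1 hh)
      refine mem_filter.2
        ⟨mem_antitoneTuples.2 ⟨?_, fun a b hab => by simpa using hanti hab⟩, by simp⟩
      simp only [sum_add_distrib, hsum, sum_const, card_univ, Fintype.card_fin, smul_eq_mul]
      omega
  · refine card_eq_zero.2 <| eq_empty_of_forall_notMem fun h hh => hM ?_
    have := sum_le_sum fun i (_ : i ∈ univ) => hpos hh i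
    simp only [sum_const, card_univ, Fintype.card_fin, smul_eq_mul, mul_one] at this
    exact this.trans (mem_antitoneTuples.1 (mem_filter.1 hh).1).1.le

def qPochhammer {R : Type*} [CommRing R] (x : R) (n : ℕ) : R :=
  ∏ i ∈ range n, (1 - x ^ (i + 1))

lemma map_qPochhammer {R S : Type*} [CommRing R] [CommRing S] (f : R →+* S) (x : R) (n : ℕ) :
    f (qPochhammer x n) = qPochhammer (f x) n := by
  simp [qPochhammer, map_prod]

noncomputable def antitoneSeries (N : ℕ) : ℚ⟦X⟧ :=
  PowerSeries.mk fun M => (#(antitoneTuples N M) : ℚ)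

noncomputable def labellingSeries (w : List ℕ) : ℚ⟦X⟧ :=
  PowerSeries.mk fun M => (#(labelledWords w M) : ℚ)

lemma antitoneSeries_zero : antitoneSeries 0 = 1 := by
  ext M
  simp [antitoneSeries, card_antitoneTuples_zero, coeff_one]

lemma antitoneSeries_succ (N : ℕ) :
    antitoneSeries (N + 1) = antitoneSeries N + X ^ (N + 1) * antitoneSeries (N + 1) := by
  ext M
  simp only [antitoneSeries, map_add, coeff_X_pow_mul', coeff_mk]
  rw [← card_filter_add_card_filter_not (p := fun h => h (Fin.last N) = 0),
    card_antitoneTuples_last_eq_zero, card_antitoneTuples_last_ne_zero]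
  split_ifs <;> simp

theorem antitoneSeries_mul_qPochhammer (N : ℕ) : antitoneSeries N * qPochhammer X N = 1 := by
  induction N with
  | zero => simp [antitoneSeries_zero, qPochhammer]
  | succ N ih =>
    rw [qPochhammer, prod_range_succ, ← qPochhammer]
    linear_combination qPochhammer X N * antitoneSeries_succ N + ih

theorem labellingSeries_eq {w : List ℕ} (hw : w.Nodup) :
    labellingSeries w = X ^ maj w * antitoneSeries w.length := by
  ext M
  simp only [labellingSeries, antitoneSeries, coeff_X_pow_mul', coeff_mk, card_labelledWords]
  split_ifs with hM
  · obtain ⟨M, rfl⟩ := Nat.exists_eq_add_of_le' hM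
    rw [card_compatibleLabellings_add_maj hw, Nat.add_sub_cancel]
  · rw [compatibleLabellings_eq_empty hw (not_le.1 hM), card_empty, Nat.cast_zero]

theorem sum_labellingSeries_shuffles {π σ : List ℕ} (hπ : IsPerm π) (hσ : IsPerm σ)
    (hd : π.Disjoint σ) :
    ∑ τ ∈ shuffles π σ, labellingSeries τ = labellingSeries π * labellingSeries σ := by
  ext M
  simp only [map_sum, coeff_mul, labellingSeries, coeff_mk]
  exact_mod_cast (card_labelledShuffles π σ M).symm.trans
    ((card_labelledShuffles_eq_card_labelledPairs hπ hσ hd M).trans (card_labelledPairs π σ M))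

theorem sum_X_pow_maj_mul_qPochhammer {π σ : List ℕ} (hπ : IsPerm π) (hσ : IsPerm σ)
    (hd : π.Disjoint σ) :
    (∑ τ ∈ shuffles π σ, X ^ maj τ : ℚ⟦X⟧) * qPochhammer X π.length * qPochhammer X σ.length =
      X ^ (maj π + maj σ) * qPochhammer X (π.length + σ.length) := by
  have h := sum_labellingSeries_shuffles hπ hσ hd
  rw [sum_congr rfl fun τ hτ => by
      rw [labellingSeries_eq (isShuffle_of_mem_shuffles hτ).2.1.1,
        (isShuffle_of_mem_shuffles hτ).1],
    ← sum_mul, labellingSeries_eq hπ.1, labellingSeries_eq hσ.1] at h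
  have hm := antitoneSeries_mul_qPochhammer π.length
  have hn := antitoneSeries_mul_qPochhammer σ.length
  have hmn := antitoneSeries_mul_qPochhammer (π.length + σ.length)
  rw [pow_add]
  linear_combination qPochhammer X π.length * qPochhammer X σ.length *
      qPochhammer X (π.length + σ.length) * h -
    (∑ τ ∈ shuffles π σ, X ^ maj τ) * qPochhammer X π.length * qPochhammer X σ.length * hmn +
    X ^ maj π * X ^ maj σ * qPochhammer X (π.length + σ.length) *
      (antitoneSeries σ.length * qPochhammer X σ.length * hm + hn)

lemma qFact_mul_one_sub_pow (q : RatFunc ℚ) (n : ℕ) :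
    qFact q n * (1 - q) ^ n = qPochhammer q n := by
  rw [qFact, qPochhammer, show (1 - q) ^ n = ∏ _i ∈ range n, (1 - q) by simp,
    ← prod_mul_distrib]
  exact prod_congr rfl fun i _ => geom_sum_mul_neg q (i + 1)

lemma qPochhammer_X_ne_zero (n : ℕ) : qPochhammer (RatFunc.X : RatFunc ℚ) n ≠ 0 := by
  rw [← RatFunc.algebraMap_X, ← map_qPochhammer]
  refine RatFunc.algebraMap_ne_zero (prod_ne_zero_iff.2 fun i _ h => ?_)
  simpa using congrArg (Polynomial.eval 0) h

lemma qBinom_X_add (m n : ℕ) :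
    qBinom RatFunc.X (m + n) m =
      qPochhammer RatFunc.X (m + n) / (qPochhammer RatFunc.X m * qPochhammer RatFunc.X n) := by
  have hne (k : ℕ) := qPochhammer_X_ne_zero k
  simp only [← qFact_mul_one_sub_pow] at hne ⊢
  have hm := left_ne_zero_of_mul (hne m)
  have hn := left_ne_zero_of_mul (hne n)
  have h1 : (1 - RatFunc.X : RatFunc ℚ) ≠ 0 := by simpa using right_ne_zero_of_mul (hne 1)
  rw [qBinom, Nat.add_sub_cancel_left]
  field_simp
  ring

/-- `∑_{τ ∈ S(π,σ)} q^{maj τ} = q^{maj π + maj σ} · [m+n choose m]_q`. -/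
theorem sum_q_maj_shuffles (π σ : List ℕ) (hπ : IsPerm π) (hσ : IsPerm σ)
    (hd : π.Disjoint σ) :
    ∑ τ ∈ shuffles π σ, (RatFunc.X : RatFunc ℚ) ^ maj τ =
      (RatFunc.X : RatFunc ℚ) ^ (maj π + maj σ) *
        qBinom RatFunc.X (π.length + σ.length) π.length := by
  have hpoly : (∑ τ ∈ shuffles π σ, Polynomial.X ^ maj τ : Polynomial ℚ) *
      qPochhammer Polynomial.X π.length * qPochhammer Polynomial.X σ.length =
      Polynomial.X ^ (maj π + maj σ) * qPochhammer Polynomial.X (π.length + σ.length) := by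
    apply Polynomial.coe_injective ℚ
    have hX : Polynomial.coeToPowerSeries.ringHom (Polynomial.X : Polynomial ℚ) = X :=
      Polynomial.coe_X
    simpa only [← Polynomial.coeToPowerSeries.ringHom_apply, map_mul, map_sum, map_pow,
      map_qPochhammer, hX] using sum_X_pow_maj_mul_qPochhammer hπ hσ hd
  have hrat := congrArg (algebraMap (Polynomial ℚ) (RatFunc ℚ)) hpoly
  simp only [map_mul, map_sum, map_pow, map_qPochhammer, RatFunc.algebraMap_X] at hrat
  rw [qBinom_X_add, mul_div_assoc', eq_div_iff (mul_ne_zero (qPochhammer_X_ne_zero _)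
    (qPochhammer_X_ne_zero _)), ← mul_assoc, hrat]
end

section
/- For n ≥ 1, the number of left peak sets of permutations of [n] (i.e., the number of distinct values of Lpk(π) as π ranges over permutations of [n]) equals the Fibonacci number F_{n+1}, where F_1 = F_2 = 1. -/
/-!
A left peak is followed by a descent, so no left peak set contains two consecutive integers.
Conversely, a set `A ⊆ [n-1]` without two consecutive elements is the left peak set of the
permutation obtained from the identity by swapping the entries `k` and `k + 1` for each `k ∈ A`.
Splitting such sets according to whether they contain `n - 1` gives the Fibonacci recurrence.
-/

open Finset

theorem lpkSet_subset_Ico (π : List ℕ) : lpkSet π ⊆ Ico 1 π.length := by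
  intro i hi
  simp only [lpkSet, mem_filter, mem_Icc] at hi
  simp only [mem_Ico]
  omega

theorem add_one_notMem_lpkSet {π : List ℕ} {i : ℕ} (hi : i ∈ lpkSet π) :
    i + 1 ∉ lpkSet π := by
  intro hi'
  simp only [lpkSet, mem_filter, add_tsub_cancel_right] at hi hi'
  exact lt_asymm hi.2.2 hi'.2.1

/-- For `A` without two consecutive elements, the product of the disjoint transpositions
`(k k+1)`, `k ∈ A`. -/
def pairSwap (A : Finset ℕ) (k : ℕ) : ℕ :=
  if k ∈ A then k + 1 else if k - 1 ∈ A then k - 1 else k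

section

variable {A : Finset ℕ} {n : ℕ}

theorem pairSwap_pairSwap (hA : ∀ i ∈ A, i + 1 ∉ A) (k : ℕ) :
    pairSwap A (pairSwap A k) = k := by
  unfold pairSwap
  by_cases hk : k ∈ A
  · simp [hk, hA k hk]
  · by_cases hk' : k - 1 ∈ A
    · have hk0 : k ≠ 0 := by rintro rfl; exact hk hk'
      simp [hk, hk', Nat.sub_add_cancel (Nat.one_le_iff_ne_zero.2 hk0)]
    · simp [hk, hk']

theorem pairSwap_mem_Icc (hA : A ⊆ Ico 1 n) {k : ℕ} (hk : k ∈ Icc 1 n) :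
    pairSwap A k ∈ Icc 1 n := by
  rw [mem_Icc] at hk ⊢
  unfold pairSwap
  split_ifs with h h'
  · have := mem_Ico.1 (hA h); omega
  · have := mem_Ico.1 (hA h'); omega
  · exact hk

theorem map_pairSwap_perm (hA : A ⊆ Ico 1 n) (hadj : ∀ i ∈ A, i + 1 ∉ A) :
    ((List.range' 1 n).map (pairSwap A)).Perm (List.range' 1 n) := by
  have hinv : Function.Involutive (pairSwap A) := pairSwap_pairSwap hadj
  have hmem (k : ℕ) : k ∈ List.range' 1 n ↔ k ∈ Icc 1 n := by
    simp only [List.mem_range'_1, mem_Icc]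
    omega
  rw [List.perm_ext_iff_of_nodup ((List.nodup_range' _).map hinv.injective) (List.nodup_range' _)]
  intro a
  simp only [List.mem_map, hmem]
  constructor
  · rintro ⟨k, hk, rfl⟩
    exact pairSwap_mem_Icc hA hk
  · intro ha
    exact ⟨pairSwap A a, pairSwap_mem_Icc hA ha, hinv a⟩

theorem getD_cons_zero_map_pairSwap (hA : A ⊆ Ico 1 n) {i : ℕ} (hi : i ≤ n) :
    (0 :: (List.range' 1 n).map (pairSwap A)).getD i 0 = pairSwap A i := by
  have h0 : pairSwap A 0 = 0 := by
    have := @hA 0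
    simp_all [pairSwap]
  have hmap := List.getD_map (List.range' 0 (n + 1)) 0 (n := i) (pairSwap A)
  rw [h0, List.getD_eq_getElem (List.range' 0 (n + 1)) _ (by simpa [Nat.lt_succ_iff]),
    List.getElem_range'] at hmap
  simpa [List.range'_succ, h0] using hmap

theorem lpkSet_map_pairSwap (hA : A ⊆ Ico 1 n) (hadj : ∀ i ∈ A, i + 1 ∉ A) :
    lpkSet ((List.range' 1 n).map (pairSwap A)) = A := by
  ext i
  have hget (j : ℕ) (hj : j ≤ n) := getD_cons_zero_map_pairSwap hA hj
  simp only [lpkSet, mem_filter, mem_Icc, List.length_map, List.length_range']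
  constructor
  · rintro ⟨hi, hpeak⟩
    rw [hget i (by omega), hget (i - 1) (by omega), hget (i + 1) (by omega)] at hpeak
    by_contra hiA
    simp only [pairSwap, Nat.add_sub_cancel] at hpeak
    split_ifs at hpeak <;> omega
  · intro hiA
    have hi := hA hiA
    simp only [mem_Ico] at hi
    refine ⟨by omega, ?_⟩
    rw [hget i (by omega), hget (i - 1) (by omega), hget (i + 1) (by omega)]
    have := hadj i hiA
    simp only [pairSwap, Nat.add_sub_cancel]
    split_ifs <;> omega

end

def nonadjSubsets (s : Finset ℕ) : Finset (Finset ℕ) :=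
  s.powerset.filter fun A => ∀ i ∈ A, i + 1 ∉ A

theorem filter_notMem_nonadjSubsets (s : Finset ℕ) (a : ℕ) :
    (nonadjSubsets s).filter (a ∉ ·) = nonadjSubsets (s.erase a) := by
  ext A
  simp only [nonadjSubsets, mem_filter, mem_powerset, subset_erase]
  tauto

theorem card_filter_mem_nonadjSubsets_Ico (n : ℕ) :
    ((nonadjSubsets (Ico 1 (n + 2))).filter (n + 1 ∈ ·)).card =
      (nonadjSubsets (Ico 1 n)).card := by
  refine card_nbij' (·.erase (n + 1)) (insert (n + 1)) ?_ ?_ ?_ ?_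
  · intro A hA
    simp only [nonadjSubsets, mem_coe, mem_filter, mem_powerset] at hA ⊢
    obtain ⟨⟨hsub, hadj⟩, hn⟩ := hA
    refine ⟨fun x hx => ?_, fun i hi hi' => hadj i (mem_of_mem_erase hi) (mem_of_mem_erase hi')⟩
    obtain ⟨hxn, hxA⟩ := mem_erase.1 hx
    have hxn' : x ≠ n := by rintro rfl; exact hadj x hxA hn
    have := mem_Ico.1 (hsub hxA)
    exact mem_Ico.2 (by omega)
  · intro B hB
    simp only [nonadjSubsets, mem_coe, mem_filter, mem_powerset] at hB ⊢
    obtain ⟨hsub, hadj⟩ := hB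
    have hbound (x : ℕ) (hx : x ∈ B) : 1 ≤ x ∧ x < n := mem_Ico.1 (hsub hx)
    refine ⟨⟨fun x hx => ?_, fun i hi hi' => ?_⟩, mem_insert_self _ _⟩
    · rcases mem_insert.1 hx with rfl | hx
      · exact mem_Ico.2 (by omega)
      · exact mem_Ico.2 (by have := hbound x hx; omega)
    · rcases mem_insert.1 hi with rfl | hi <;> rcases mem_insert.1 hi' with h | h
      · omega
      · have := hbound _ h; omega
      · have := hbound _ hi; omega
      · exact hadj i hi h
  · intro A hA
    exact insert_erase (mem_filter.1 hA).2
  · intro B hB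
    refine erase_insert fun h => ?_
    simp only [nonadjSubsets, mem_coe, mem_filter, mem_powerset] at hB
    simpa using hB.1 h

theorem card_nonadjSubsets_Ico : ∀ n, (nonadjSubsets (Ico 1 n)).card = Nat.fib (n + 1)
  | 0 => rfl
  | 1 => rfl
  | n + 2 => by
    have herase : (Ico 1 (n + 2)).erase (n + 1) = Ico 1 (n + 1) := by
      rw [Nat.Ico_succ_right_eq_insert_Ico (by omega), erase_insert (by simp)]
    rw [← card_filter_add_card_filter_not (fun A => n + 1 ∈ A),
      card_filter_mem_nonadjSubsets_Ico, filter_notMem_nonadjSubsets, herase,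
      card_nonadjSubsets_Ico n, card_nonadjSubsets_Ico (n + 1)]
    exact (Nat.fib_add_two (n := n + 1)).symm

theorem lpkSets_eq_nonadjSubsets (n : ℕ) :
    {A : Finset ℕ | ∃ π : List ℕ, π.Perm (List.range' 1 n) ∧ lpkSet π = A} =
      nonadjSubsets (Ico 1 n) := by
  ext A
  simp only [Set.mem_ofPred_eq, mem_coe, nonadjSubsets, mem_filter, mem_powerset]
  constructor
  · rintro ⟨π, hπ, rfl⟩
    rw [← List.length_range' (s := 1) (n := n), ← hπ.length_eq]
    exact ⟨lpkSet_subset_Ico π, fun i => add_one_notMem_lpkSet⟩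
  · rintro ⟨hsub, hadj⟩
    exact ⟨_, map_pairSwap_perm hsub hadj, lpkSet_map_pairSwap hsub hadj⟩

theorem card_lpkSets_general (n : ℕ) :
    {A : Finset ℕ | ∃ π : List ℕ, π.Perm (List.range' 1 n) ∧ lpkSet π = A}.ncard =
      Nat.fib (n + 1) := by
  rw [lpkSets_eq_nonadjSubsets, Set.ncard_coe_finset, card_nonadjSubsets_Ico]

/-- The number of distinct left peak sets of permutations of `[n]` is the
Fibonacci number `F_{n+1}` (with `F_1 = F_2 = 1`). -/
theorem card_lpkSets (n : ℕ) (hn : 1 ≤ n) :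
    {A : Finset ℕ | ∃ π : List ℕ, π.Perm (List.range' 1 n) ∧ lpkSet π = A}.ncard =
      Nat.fib (n + 1) :=
  card_lpkSets_general n
end
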